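/- It holds ι ⪯ ^ι ⪯ ι' continuously, but the converse reductions are discontinuous: (i) there is a continuous function mapping each σ ∈ 𝒞 to a ^ι-name of σ, and every ^ι-name of σ is already an ι'-name of σ; (ii) there is NO continuous function F defined on the set of all ^ι-names such that F(p) = σ for every σ ∈ 𝒞 and every ^ι-name p of σ; and (iii) there is NO continuous function G defined on the set of all ι'-names such that G(p) is a ^ι-name of σ for every σ ∈ 𝒞 and every ι'-name p of σ. -/
import Mathlib


open Filter Topology

/-- An ι'-name of `σ ∈ 𝒞`: a double sequence (identified with an element of `𝒞`
via `Nat.pair`) whose `n`-th row is eventually constant with value `σ n`. -/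
def IsIotaPrimeName (τ σ : ℕ → Bool) : Prop :=
  ∀ n : ℕ, ∃ M : ℕ, ∀ m : ℕ, M ≤ m → τ (Nat.pair n m) = σ n

/-- A `^ι`-name of `σ ∈ 𝒞`: a double sequence `τ` for which there exists an `M`
with `τ (n, m) = σ n` for all `m ≥ M` and all `n`. -/
def IsHatIotaName (τ σ : ℕ → Bool) : Prop :=
  ∃ M : ℕ, ∀ n m : ℕ, M ≤ m → τ (Nat.pair n m) = σ n

/-- Pointwise eventually-equal convergence of a sequence in Cantor space. -/
lemma seq_tendsto {f : ℕ → ℕ → Bool} {ρ : ℕ → Bool}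
    (h : ∀ k, ∀ᶠ j in atTop, f j k = ρ k) : Tendsto f atTop (𝓝 ρ) :=
  tendsto_pi_nhds.2 fun k => Tendsto.congr' (by filter_upwards [h k] with j hj using hj.symm)
    tendsto_const_nhds

/-- Continuity on a set at a point gives a "cylinder" of agreement determining
one output coordinate. -/
lemma cyl {A : Set (ℕ → Bool)} {G : (ℕ → Bool) → (ℕ → Bool)}
    (hG : ContinuousOn G A) {ρ : ℕ → Bool} (hρ : ρ ∈ A) (c : ℕ) :
    ∃ b : ℕ, ∀ τ ∈ A, (∀ k < b, τ k = ρ k) → G τ c = G ρ c := by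
  by_contra h
  push_neg at h
  choose f hfA hagree hne using h
  have htend : Tendsto f atTop (𝓝[A] ρ) := by
    refine tendsto_nhdsWithin_of_tendsto_nhds_of_eventually_within _ ?_
      (Eventually.of_forall hfA)
    exact seq_tendsto fun k => by
      filter_upwards [eventually_gt_atTop k] with j hj using hagree j k hj
  have h1 : Tendsto (fun j => G (f j) c) atTop (𝓝 (G ρ c)) :=
    ((continuous_apply c).continuousAt.tendsto).comp ((hG ρ hρ).tendsto.comp htend)
  have h2 : Tendsto (fun j => G (f j) c) atTop (𝓝 (!(G ρ c))) := by
    refine Tendsto.congr' ?_ tendsto_const_nhds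
    filter_upwards with j
    cases hGc : G ρ c <;> cases hfc : G (f j) c <;> simp_all
  have := tendsto_nhds_unique h1 h2
  simp at this

/-- `ι ⪯ ^ι ⪯ ι'` continuously, but the converse reductions are
discontinuous: (i) some continuous map sends each `σ` to a `^ι`-name of `σ`, and
every `^ι`-name is an ι'-name; (ii) no continuous map defined on the set of all
`^ι`-names recovers `σ` from every `^ι`-name of `σ`; (iii) no continuous map
defined on the set of all ι'-names sends every ι'-name of `σ` to a `^ι`-name of `σ`. -/
theorem stmt15 :
    ((∃ F : (ℕ → Bool) → (ℕ → Bool), Continuous F ∧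
        ∀ σ : ℕ → Bool, IsHatIotaName (F σ) σ) ∧
     (∀ τ σ : ℕ → Bool, IsHatIotaName τ σ → IsIotaPrimeName τ σ)) ∧
    (¬ ∃ F : (ℕ → Bool) → (ℕ → Bool),
        ContinuousOn F {τ | ∃ σ : ℕ → Bool, IsHatIotaName τ σ} ∧
        ∀ σ τ : ℕ → Bool, IsHatIotaName τ σ → F τ = σ) ∧
    (¬ ∃ G : (ℕ → Bool) → (ℕ → Bool),
        ContinuousOn G {τ | ∃ σ : ℕ → Bool, IsIotaPrimeName τ σ} ∧
        ∀ σ τ : ℕ → Bool, IsIotaPrimeName τ σ → IsHatIotaName (G τ) σ) := by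
  refine ⟨⟨⟨fun σ k => σ (Nat.unpair k).1, ?_, ?_⟩, ?_⟩, ?_, ?_⟩
  · exact continuous_pi fun k => continuous_apply _
  · exact fun σ => ⟨0, fun n m _ => by simp⟩
  · exact fun τ σ ⟨M, hM⟩ n => ⟨M, fun m hm => hM n m hm⟩
  · -- (ii)
    rintro ⟨F, hFc, hF⟩
    set A : Set (ℕ → Bool) := {τ | ∃ σ : ℕ → Bool, IsHatIotaName τ σ} with hA
    have hτ0 : (fun _ => false : ℕ → Bool) ∈ A :=
      ⟨fun _ => false, 0, fun n m _ => rfl⟩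
    set τ : ℕ → ℕ → Bool :=
      fun j k => decide ((Nat.unpair k).1 = 0 ∧ j ≤ (Nat.unpair k).2) with hτ
    have hname : ∀ j, IsHatIotaName (τ j) (fun n => decide (n = 0)) := by
      intro j
      refine ⟨j, fun n m hm => ?_⟩
      simp [hτ, hm]
    have hτA : ∀ j, τ j ∈ A := fun j => ⟨_, hname j⟩
    have htend : Tendsto τ atTop (𝓝[A] (fun _ => false)) := by
      refine tendsto_nhdsWithin_of_tendsto_nhds_of_eventually_within _ ?_
        (Eventually.of_forall hτA)
      refine seq_tendsto fun k => ?_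
      filter_upwards [eventually_gt_atTop (Nat.unpair k).2] with j hj
      simp [hτ]; omega
    have h1 : Tendsto (fun j => F (τ j) 0) atTop (𝓝 (F (fun _ => false) 0)) :=
      ((continuous_apply 0).continuousAt.tendsto).comp
        (((hFc _ hτ0).tendsto).comp htend)
    have hval0 : F (fun _ => false) 0 = false := by
      rw [hF (fun _ => false) (fun _ => false) ⟨0, fun n m _ => rfl⟩]
    have hvalj : ∀ j, F (τ j) 0 = true := by
      intro j
      rw [hF (fun n => decide (n = 0)) (τ j) (hname j)]
      simp
    rw [hval0] at h1
    have h2 : Tendsto (fun j => F (τ j) 0) atTop (𝓝 true) := by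
      refine Tendsto.congr' ?_ tendsto_const_nhds
      filter_upwards with j using (hvalj j).symm
    simpa using tendsto_nhds_unique h1 h2
  · -- (iii)
    rintro ⟨G, hGc, hG⟩
    set A : Set (ℕ → Bool) := {τ | ∃ σ : ℕ → Bool, IsIotaPrimeName τ σ} with hA
    -- any sequence that beyond b is "row ≠ n" is an ι'-name of (· ≠ n)
    have memA : ∀ (n b : ℕ) (ρ : ℕ → Bool),
        (∀ k, b ≤ k → ρ k = decide ((Nat.unpair k).1 ≠ n)) →
        IsIotaPrimeName ρ (fun a => decide (a ≠ n)) := by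
      intro n b ρ h a
      refine ⟨b, fun m hm => ?_⟩
      rw [h _ (le_trans hm (Nat.right_le_pair a m))]
      simp
    -- the key step: extract a cylinder forcing a `false` value
    have step : ∀ (n b : ℕ) (ρ : ℕ → Bool), ∃ b' m : ℕ, b < b' ∧ n ≤ m ∧
        ((∀ k, b ≤ k → ρ k = decide ((Nat.unpair k).1 ≠ n)) →
          ∀ τ ∈ A, (∀ k < b', τ k = ρ k) → G τ (Nat.pair n m) = false) := by
      intro n b ρ
      by_cases h : ∀ k, b ≤ k → ρ k = decide ((Nat.unpair k).1 ≠ n)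
      · have hρname := memA n b ρ h
        have hρA : ρ ∈ A := ⟨_, hρname⟩
        obtain ⟨M, hM⟩ := hG _ ρ hρname
        set m := max M n with hm
        have hfalse : G ρ (Nat.pair n m) = false := by
          have := hM n m (le_max_left _ _)
          simpa using this
        obtain ⟨b0, hb0⟩ := cyl hGc hρA (Nat.pair n m)
        refine ⟨max b0 b + 1, m, by omega, le_max_right _ _,
          fun _ τ hτ hagree => ?_⟩
        rw [hb0 τ hτ (fun k hk => hagree k (by omega))]
        exact hfalse
      · exact ⟨b + 1, n, by omega, le_rfl, fun h' => absurd h' h⟩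
    choose B M hB hMn hspec using step
    -- recursive construction of the stages
    let S : ℕ → ℕ × (ℕ → Bool) := fun n => Nat.rec
      ((0 : ℕ), fun k => decide ((Nat.unpair k).1 ≠ 0))
      (fun n p => (B n p.1 p.2,
        fun k => if k < B n p.1 p.2 then p.2 k
          else decide ((Nat.unpair k).1 ≠ (n + 1)))) n
    have hSsucc : ∀ n, S (n + 1) = (B n (S n).1 (S n).2,
        fun k => if k < B n (S n).1 (S n).2 then (S n).2 k
          else decide ((Nat.unpair k).1 ≠ (n + 1))) := fun n => rfl
    have hInv : ∀ n k, (S n).1 ≤ k → (S n).2 k = decide ((Nat.unpair k).1 ≠ n) := by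
      intro n k hk
      cases n with
      | zero => rfl
      | succ n =>
          rw [hSsucc n] at hk ⊢
          simp only
          rw [if_neg (by omega)]
    have hmono : ∀ n, (S n).1 < (S (n + 1)).1 := by
      intro n; rw [hSsucc n]; exact hB n (S n).1 (S n).2
    have hge : ∀ n, n ≤ (S n).1 := by
      intro n
      induction n with
      | zero => exact Nat.zero_le _
      | succ n ih => exact lt_of_le_of_lt ih (hmono n)
    have hsm : StrictMono (fun n => (S n).1) := strictMono_nat_of_lt_succ hmono
    have hge : ∀ n, n ≤ (S n).1 := fun n => hsm.le_apply
    have stable : ∀ n m, n ≤ m → ∀ k, k < (S (n + 1)).1 → (S m).2 k = (S n).2 k := by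
      intro n m hnm k hk
      induction hnm with
      | refl => rfl
      | @step m h ih =>
          rw [hSsucc m]
          simp only
          have hle : (S (n + 1)).1 ≤ (S (m + 1)).1 := hsm.monotone (Nat.succ_le_succ h)
          rw [hSsucc m] at hle
          rw [if_pos (lt_of_lt_of_le hk hle)]
          exact ih
    set τ : ℕ → Bool := fun k => (S (k + 1)).2 k with hτdef
    have agree : ∀ n k, k < (S (n + 1)).1 → τ k = (S n).2 k := by
      intro n k hk
      by_cases h : n ≤ k + 1
      · exact stable n (k + 1) h k hk
      · exact (stable (k + 1) n (by omega) k
          (lt_of_lt_of_le (by omega) (hge (k + 2)))).symm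
    have τtrue : ∀ k, (S ((Nat.unpair k).1 + 1)).1 ≤ k → τ k = true := by
      intro k hk
      have hex : ∃ j, k < (S j).1 := ⟨k + 1, lt_of_lt_of_le (by omega) (hge (k + 1))⟩
      have hjlt := Nat.find_spec hex
      have hj0 : Nat.find hex ≠ 0 := by
        intro h0
        rw [h0] at hjlt
        have h00 : (S 0).1 = 0 := rfl
        omega
      set n := Nat.find hex - 1 with hndef
      have hfind : Nat.find hex = n + 1 := by omega
      rw [hfind] at hjlt
      have hnk : (S n).1 ≤ k := by
        have := Nat.find_min hex (m := n) (by omega)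
        omega
      have ha : (Nat.unpair k).1 < n := by
        by_contra hc
        have : (S (n + 1)).1 ≤ (S ((Nat.unpair k).1 + 1)).1 :=
          hsm.monotone (Nat.succ_le_succ (Nat.le_of_not_lt hc))
        omega
      rw [agree n k hjlt, hInv n k hnk]
      simp
      omega
    have τname : IsIotaPrimeName τ (fun _ => true) := by
      intro a
      refine ⟨(S (a + 1)).1, fun m hm => ?_⟩
      apply τtrue
      simp only [Nat.unpair_pair]
      exact le_trans hm (Nat.right_le_pair a m)
    have τmem : τ ∈ A := ⟨_, τname⟩
    obtain ⟨Minf, hMinf⟩ := hG _ τ τname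
    set n := Minf with hn
    have hfalse : G τ (Nat.pair n (M n (S n).1 (S n).2)) = false := by
      refine hspec n (S n).1 (S n).2 (hInv n) τ τmem fun k hk => ?_
      refine agree n k ?_
      rw [hSsucc n]
      exact hk
    have htrue := hMinf n (M n (S n).1 (S n).2) (hMn n (S n).1 (S n).2)
    simp only at htrue
    rw [hfalse] at htrue
    exact Bool.false_ne_true htrue
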